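/- (Convergence of the iterates to an eigenvector) Fix 0 ≤ η < 1 and let (u_k) be a sequence in H generated by approximate inverse iteration: each u_k has ‖u_k‖₀ = 1, λ(u₀) < λ₂, and for each k, u_{k+1} = (u_k − v_k)/‖u_k − v_k‖₀ where w_k solves a(w_k,χ) = a(u_k,χ) − λ(u_k)(u_k,χ) for all χ ∈ H and ‖v_k − w_k‖ ≤ η‖w_k‖. Then (u_k) is a Cauchy sequence in the energy norm and converges to a limit u* ∈ H with ‖u*‖₀ = 1 which is an eigenvector for the minimum eigenvalue, i.e., u* ∈ E₁ (equivalently u* = P₁u*). -/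

import Mathlib

open scoped RealInnerProductSpace

/-- The Rayleigh quotient `λ(u) = a(u,u)/(u,u)`, where `a = ⟪·,·⟫` is the inner product of the
Hilbert space `H` (inducing the energy norm `‖·‖`) and `b` is the second inner product `(·,·)`
(inducing the weaker norm `‖·‖₀ = √(b u u)`). Note `⟪u,u⟫ = ‖u‖²`. -/
noncomputable def rayleigh {H : Type*} [NormedAddCommGroup H] [InnerProductSpace ℝ H]
    (b : LinearMap.BilinForm ℝ H) (u : H) : ℝ :=
  ‖u‖ ^ 2 / b u u

section helpers
variable {H : Type*} [NormedAddCommGroup H] [InnerProductSpace ℝ H]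
variable (b : LinearMap.BilinForm ℝ H)

lemma bilin_nonneg (hb_pos : ∀ x : H, x ≠ 0 → 0 < b x x) (x : H) : 0 ≤ b x x := by
  by_cases hx : x = 0
  · simp [hx]
  · exact (hb_pos x hx).le

lemma bilin_expand (hb_symm : ∀ x y : H, b x y = b y x) (x y : H) (t : ℝ) :
    b (x + t • y) (x + t • y) = b y y * (t * t) + (2 * b x y) * t + b x x := by
  simp only [map_add, map_smul, LinearMap.add_apply, LinearMap.smul_apply, smul_eq_mul]
  rw [hb_symm y x]; ring

lemma bilin_cs (hb_symm : ∀ x y : H, b x y = b y x)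
    (hb0 : ∀ x : H, 0 ≤ b x x) (x y : H) : (b x y) ^ 2 ≤ b x x * b y y := by
  have h : ∀ t : ℝ, 0 ≤ b y y * (t * t) + (2 * b x y) * t + b x x := by
    intro t
    have := hb0 (x + t • y)
    rw [bilin_expand b hb_symm] at this
    nlinarith
  have hd := discrim_le_zero (a := b y y) (b := 2 * b x y) (c := b x x) h
  rw [discrim] at hd
  nlinarith

lemma bilin_abs_le (hb_symm : ∀ x y : H, b x y = b y x)
    (hb0 : ∀ x : H, 0 ≤ b x x) (x y : H) :
    |b x y| ≤ Real.sqrt (b x x) * Real.sqrt (b y y) := by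
  have h := bilin_cs b hb_symm hb0 x y
  have : |b x y| = Real.sqrt ((b x y) ^ 2) := by
    rw [Real.sqrt_sq_eq_abs]
  rw [this, ← Real.sqrt_mul (hb0 x)]
  exact Real.sqrt_le_sqrt h

lemma bilin_sub_expand (hb_symm : ∀ x y : H, b x y = b y x) (x y : H) :
    b (x - y) (x - y) = b x x - 2 * b x y + b y y := by
  simp only [map_sub, LinearMap.sub_apply]
  rw [hb_symm y x]; ring

lemma bilin_sqrt_triangle (hb_symm : ∀ x y : H, b x y = b y x)
    (hb0 : ∀ x : H, 0 ≤ b x x) (x y : H) :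
    Real.sqrt (b (x + y) (x + y)) ≤ Real.sqrt (b x x) + Real.sqrt (b y y) := by
  have hxy : b x y ≤ Real.sqrt (b x x) * Real.sqrt (b y y) :=
    (le_abs_self _).trans (bilin_abs_le b hb_symm hb0 x y)
  have hexp : b (x + y) (x + y) = b x x + 2 * b x y + b y y := by
    simp only [map_add, LinearMap.add_apply]
    rw [hb_symm y x]; ring
  have h1 : b (x + y) (x + y) ≤ (Real.sqrt (b x x) + Real.sqrt (b y y)) ^ 2 := by
    rw [hexp]
    have hx := Real.sq_sqrt (hb0 x)
    have hy := Real.sq_sqrt (hb0 y)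
    nlinarith
  calc Real.sqrt (b (x + y) (x + y)) ≤ Real.sqrt ((Real.sqrt (b x x) + Real.sqrt (b y y)) ^ 2) :=
        Real.sqrt_le_sqrt h1
    _ = Real.sqrt (b x x) + Real.sqrt (b y y) := by
        rw [Real.sqrt_sq (by positivity)]

lemma quad_nonneg_zero (A Bc : ℝ) (hA : 0 ≤ A)
    (h : ∀ t : ℝ, 0 ≤ t ^ 2 * A + 2 * t * Bc) : Bc = 0 := by
  by_contra hne
  have hA1 : (0:ℝ) < A + 1 := by linarith
  have ht := h (-Bc / (A + 1))
  have hBc2 : 0 < Bc ^ 2 := lt_of_le_of_ne (sq_nonneg Bc) (Ne.symm (pow_ne_zero 2 hne))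
  have key : (-Bc / (A + 1)) ^ 2 * A + 2 * (-Bc / (A + 1)) * Bc
      = -(Bc ^ 2 * (A + 2) / (A + 1) ^ 2) := by
    field_simp
    ring
  rw [key] at ht
  have h2 : 0 < Bc ^ 2 * (A + 2) / (A + 1) ^ 2 := by positivity
  linarith

end helpers

set_option maxHeartbeats 4000000 in
/-- the iterates form a Cauchy sequence in the energy norm and converge to a
normalized eigenvector `u*` for the minimum eigenvalue `λ₁`. -/
theorem iterates_converge_to_eigenvector {H : Type*} [NormedAddCommGroup H] [InnerProductSpace ℝ H] [CompleteSpace H]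
    (b : LinearMap.BilinForm ℝ H)
    (hb_symm : ∀ x y : H, b x y = b y x)
    (hb_pos : ∀ x : H, x ≠ 0 → 0 < b x x)
    (lam1 : ℝ) (hlam1 : 0 < lam1)
    (hmin : ∀ x : H, x ≠ 0 → lam1 ≤ rayleigh b x)
    (hE1 : ∃ x : H, x ≠ 0 ∧ ∀ χ : H, ⟪ x, χ⟫ = lam1 * b x χ)
    (lam2 : ℝ) (hlam12 : lam1 < lam2)
    (hmin2 : ∀ x : H, x ≠ 0 →
      (∀ χ₁ : H, (∀ χ : H, ⟪χ₁, χ⟫ = lam1 * b χ₁ χ) → b x χ₁ = 0) →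
      lam2 ≤ rayleigh b x)
    (eta : ℝ) (heta0 : 0 ≤ eta) (heta1 : eta < 1)
    (u v w : ℕ → H)
    (hnorm : ∀ k, b (u k) (u k) = 1)
    (h0 : rayleigh b (u 0) < lam2)
    (hw : ∀ k, ∀ χ : H, ⟪w k, χ⟫ = ⟪u k, χ⟫ - rayleigh b (u k) * b (u k) χ)
    (hv : ∀ k, ‖v k - w k‖ ≤ eta * ‖w k‖)
    (hiter : ∀ k, u (k + 1) = (Real.sqrt (b (u k - v k) (u k - v k)))⁻¹ • (u k - v k)) :
    CauchySeq u ∧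
    ∃ ustar : H, Filter.Tendsto u Filter.atTop (nhds ustar) ∧
      b ustar ustar = 1 ∧ ∀ χ : H, ⟪ustar, χ⟫ = lam1 * b ustar χ := by
  classical
  have hb0 : ∀ x : H, 0 ≤ b x x := bilin_nonneg b hb_pos
  have hl2 : (0:ℝ) < lam2 := lt_trans hlam1 hlam12
  have hbound : ∀ x : H, lam1 * b x x ≤ ‖x‖ ^ 2 := by
    intro x
    by_cases hx : x = 0
    · simp [hx]
    · have h := hmin x hx
      rw [rayleigh, le_div_iff₀ (hb_pos x hx)] at h
      linarith
  have hsl1 : (0:ℝ) < Real.sqrt lam1 := Real.sqrt_pos.mpr hlam1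
  have hbnorm : ∀ x : H, Real.sqrt (b x x) ≤ ‖x‖ / Real.sqrt lam1 := by
    intro x
    rw [le_div_iff₀ hsl1]
    have h1 : Real.sqrt (b x x) * Real.sqrt lam1 = Real.sqrt (lam1 * b x x) := by
      rw [← Real.sqrt_mul (hb0 x), mul_comm]
    rw [h1]
    calc Real.sqrt (lam1 * b x x) ≤ Real.sqrt (‖x‖ ^ 2) := Real.sqrt_le_sqrt (hbound x)
      _ = ‖x‖ := Real.sqrt_sq (norm_nonneg x)
  have hbabs : ∀ x y : H, |b x y| ≤ ‖x‖ * ‖y‖ / lam1 := by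
    intro x y
    calc |b x y| ≤ Real.sqrt (b x x) * Real.sqrt (b y y) := bilin_abs_le b hb_symm hb0 x y
      _ ≤ (‖x‖ / Real.sqrt lam1) * (‖y‖ / Real.sqrt lam1) := by
          apply mul_le_mul (hbnorm x) (hbnorm y) (Real.sqrt_nonneg _) (by positivity)
      _ = ‖x‖ * ‖y‖ / lam1 := by
          rw [div_mul_div_comm, Real.mul_self_sqrt hlam1.le]
  -- the eigenspace as a closed submodule
  let K : Submodule ℝ H :=
    { carrier := {x : H | ∀ χ : H, ⟪x, χ⟫ = lam1 * b x χ}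
      add_mem' := by
        intro a c ha hc χ
        simp only [Set.mem_setOf_eq] at *
        rw [inner_add_left, ha χ, hc χ]
        simp only [map_add, LinearMap.add_apply]
        ring
      zero_mem' := by
        intro χ
        simp
      smul_mem' := by
        intro t a ha χ
        simp only [Set.mem_setOf_eq] at *
        rw [real_inner_smul_left, ha χ]
        simp only [map_smul, LinearMap.smul_apply, smul_eq_mul]
        ring }
  have hKmem : ∀ x : H, x ∈ K ↔ ∀ χ : H, ⟪x, χ⟫ = lam1 * b x χ := fun x => Iff.rfl
  -- continuity of b
  have hbcont : ∀ χ : H, Continuous fun x : H => b x χ := by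
    intro χ
    apply AddMonoidHomClass.continuous_of_bound (LinearMap.flip b χ) (‖χ‖ / lam1)
    intro x
    have := hbabs x χ
    rw [LinearMap.flip_apply]
    calc ‖b x χ‖ = |b x χ| := rfl
      _ ≤ ‖x‖ * ‖χ‖ / lam1 := this
      _ = ‖χ‖ / lam1 * ‖x‖ := by ring
  have hKclosed : IsClosed (K : Set H) := by
    have heq : (K : Set H) = ⋂ χ : H, {x : H | ⟪x, χ⟫ = lam1 * b x χ} := by
      ext x
      simp only [Set.mem_iInter, Set.mem_setOf_eq]
      exact hKmem x
    rw [heq]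
    refine isClosed_iInter fun χ => ?_
    have h1 : Continuous fun x : H => ⟪x, χ⟫ := continuous_id.inner continuous_const
    have h2 : Continuous fun x : H => lam1 * b x χ := continuous_const.mul (hbcont χ)
    exact isClosed_eq h1 h2
  haveI : CompleteSpace K := hKclosed.completeSpace_coe
  -- projection and error components
  set s : ℕ → H := fun k => (K.orthogonalProjectionOnto (u k) : H) with hsdef
  set e : ℕ → H := fun k => u k - s k with hedef
  have hsK : ∀ k, s k ∈ K := fun k => (K.orthogonalProjectionOnto (u k)).2
  have heO : ∀ k, e k ∈ Kᗮ := fun k => Submodule.sub_starProjection_mem_orthogonal (K := K) (u k)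
  have hse : ∀ k, ⟪s k, e k⟫ = 0 := fun k => (heO k) (s k) (hsK k)
  have hbze : ∀ k, ∀ z ∈ K, b z (e k) = 0 := by
    intro k z hz
    have h1 : ⟪z, e k⟫ = 0 := (heO k) z hz
    have h2 : ⟪z, e k⟫ = lam1 * b z (e k) := hz (e k)
    have h3 : lam1 * b z (e k) = 0 := by rw [← h2]; exact h1
    exact (mul_eq_zero.mp h3).resolve_left hlam1.ne'
  have hbez : ∀ k, ∀ z ∈ K, b (e k) z = 0 := by
    intro k z hz
    rw [hb_symm]
    exact hbze k z hz
  have he2 : ∀ k, lam2 * b (e k) (e k) ≤ ‖e k‖ ^ 2 := by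
    intro k
    by_cases hek : e k = 0
    · simp [hek]
    · have h := hmin2 (e k) hek (fun χ₁ hχ₁ => hbez k χ₁ hχ₁)
      rw [rayleigh, le_div_iff₀ (hb_pos _ hek)] at h
      linarith
  -- basic facts about the iterates
  set lam : ℕ → ℝ := fun k => rayleigh b (u k) with hlamdef
  have hlamk : ∀ k, rayleigh b (u k) = lam k := fun _ => rfl
  have hlameq : ∀ k, lam k = ‖u k‖ ^ 2 := by
    intro k
    simp [hlamdef, rayleigh, hnorm k]
  have hune : ∀ k, u k ≠ 0 := by
    intro k h
    have h1 := hnorm k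
    rw [h] at h1
    simp at h1
  have hlam_ge : ∀ k, lam1 ≤ lam k := fun k => hmin (u k) (hune k)
  have hlam_pos : ∀ k, 0 < lam k := fun k => lt_of_lt_of_le hlam1 (hlam_ge k)
  have hueq : ∀ k, u k = s k + e k := by
    intro k
    simp [hedef]
  -- decomposition identities
  have hn2 : ∀ k, ‖u k‖ ^ 2 = ‖s k‖ ^ 2 + ‖e k‖ ^ 2 := by
    intro k
    rw [hueq k, @norm_add_sq_real, hse k]
    ring
  have hbu : ∀ k, b (u k) (u k) = b (s k) (s k) + b (e k) (e k) := by
    intro k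
    conv_lhs => rw [hueq k]
    simp only [map_add, LinearMap.add_apply]
    have h1 : b (s k) (e k) = 0 := hbze k (s k) (hsK k)
    have h2 : b (e k) (s k) = 0 := hbez k (s k) (hsK k)
    rw [h1, h2]
    ring
  have hs2 : ∀ k, ‖s k‖ ^ 2 = lam1 * b (s k) (s k) := by
    intro k
    have h1 := (hsK k) (s k)
    rw [real_inner_self_eq_norm_sq] at h1
    exact h1
  have hdelta : ∀ k, lam k - lam1 = ‖e k‖ ^ 2 - lam1 * b (e k) (e k) := by
    intro k
    have h1 := hnorm k
    rw [hbu k] at h1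
    have h2 := hn2 k
    have h3 := hs2 k
    rw [hlameq k]
    nlinarith
  have hdnn : ∀ k, 0 ≤ lam k - lam1 := fun k => by linarith [hlam_ge k]
  have hdle : ∀ k, lam k - lam1 ≤ ‖e k‖ ^ 2 := by
    intro k
    have := hdelta k
    nlinarith [hb0 (e k), hlam1.le]
  have hgap : ∀ k, (lam2 - lam1) * ‖e k‖ ^ 2 ≤ lam2 * (lam k - lam1) := by
    intro k
    have h1 := he2 k
    have h2 := hdelta k
    nlinarith [hlam1.le]
  -- facts about w
  have hwu : ∀ k, ⟪w k, u k⟫ = 0 := by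
    intro k
    rw [hw k (u k), hnorm k, real_inner_self_eq_norm_sq, hlamk k, hlameq k]
    ring
  have hwe : ∀ k, ⟪w k, e k⟫ = ‖e k‖ ^ 2 - lam k * b (e k) (e k) := by
    intro k
    rw [hw k (e k), hlamk k]
    have h1 : ⟪u k, e k⟫ = ‖e k‖ ^ 2 := by
      rw [hueq k, inner_add_left, hse k, real_inner_self_eq_norm_sq]
      ring
    have h2 : b (u k) (e k) = b (e k) (e k) := by
      conv_lhs => rw [hueq k]
      simp only [map_add, LinearMap.add_apply]
      rw [hbze k (s k) (hsK k)]
      ring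
    rw [h1, h2]
  -- the next iterate is nonzero before normalization
  have hu'ne : ∀ k, u k - v k ≠ 0 := by
    intro k h
    have h2 := hnorm (k + 1)
    rw [hiter k, h] at h2
    simp at h2
  have hb'pos : ∀ k, 0 < b (u k - v k) (u k - v k) := fun k => hb_pos _ (hu'ne k)
  -- key one-step energy inequality
  have hkey : ∀ k, ‖u k - v k‖ ^ 2 ≤
      lam k * b (u k - v k) (u k - v k) - (1 - eta ^ 2) * ‖w k‖ ^ 2 := by
    intro k
    have h1 : ‖u k - v k‖ ^ 2 = ‖u k‖ ^ 2 - 2 * ⟪u k, v k⟫ + ‖v k‖ ^ 2 :=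
      @norm_sub_sq_real _ _ _ (u k) (v k)
    have h2 : b (u k - v k) (u k - v k) = 1 - 2 * b (u k) (v k) + b (v k) (v k) := by
      rw [bilin_sub_expand b hb_symm, hnorm k]
    have h3 : ⟪w k, v k⟫ = ⟪u k, v k⟫ - lam k * b (u k) (v k) := by
      rw [hw k (v k), hlamk k]
    have h4 : ‖v k - w k‖ ^ 2 = ‖v k‖ ^ 2 - 2 * ⟪v k, w k⟫ + ‖w k‖ ^ 2 :=
      @norm_sub_sq_real _ _ _ (v k) (w k)
    have h5 : ‖v k - w k‖ ^ 2 ≤ eta ^ 2 * ‖w k‖ ^ 2 := by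
      have := hv k
      nlinarith [norm_nonneg (v k - w k), norm_nonneg (w k)]
    have h6 : 0 ≤ b (v k) (v k) := hb0 _
    have h7 : ⟪v k, w k⟫ = ⟪w k, v k⟫ := real_inner_comm _ _
    have h8 := hlameq k
    nlinarith [mul_nonneg (hlam_pos k).le h6]
  -- Rayleigh quotient of the next iterate
  have hray : ∀ k, lam (k + 1) = ‖u k - v k‖ ^ 2 / b (u k - v k) (u k - v k) := by
    intro k
    have hb' := hb'pos k
    have hc : Real.sqrt (b (u k - v k) (u k - v k)) ≠ 0 := (Real.sqrt_pos.mpr hb').ne'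
    have hc2 : (Real.sqrt (b (u k - v k) (u k - v k)))⁻¹ ^ 2 ≠ 0 := by positivity
    rw [← hlamk (k + 1), hiter k, rayleigh]
    set c := (Real.sqrt (b (u k - v k) (u k - v k)))⁻¹ with hcdef
    have hbs : b (c • (u k - v k)) (c • (u k - v k)) = c ^ 2 * b (u k - v k) (u k - v k) := by
      simp only [map_smul, LinearMap.smul_apply, smul_eq_mul]
      ring
    have hns : ‖c • (u k - v k)‖ ^ 2 = c ^ 2 * ‖u k - v k‖ ^ 2 := by
      rw [norm_smul]
      simp [mul_pow, sq_abs]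
    rw [hns, hbs, mul_div_mul_left _ _ hc2]
  have hstep : ∀ k, lam (k + 1) ≤
      lam k - (1 - eta ^ 2) * ‖w k‖ ^ 2 / b (u k - v k) (u k - v k) := by
    intro k
    have hb' := hb'pos k
    rw [hray k, div_le_iff₀ hb', sub_mul, div_mul_cancel₀ _ hb'.ne']
    exact hkey k
  have heta2 : 0 ≤ 1 - eta ^ 2 := by nlinarith
  have hmono : ∀ k, lam (k + 1) ≤ lam k := by
    intro k
    have h1 := hstep k
    have h2 : 0 ≤ (1 - eta ^ 2) * ‖w k‖ ^ 2 / b (u k - v k) (u k - v k) := by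
      apply div_nonneg _ (hb'pos k).le
      positivity
    linarith
  have hlam_le : ∀ k, lam k ≤ lam 0 := by
    intro k
    induction k with
    | zero => exact le_refl _
    | succ n ih => exact (hmono n).trans ih
  have hlam0lt : lam 0 < lam2 := by rw [← hlamk 0]; exact h0
  set g := 1 - lam 0 / lam2 with hgdef
  have hg : 0 < g := by
    have h1 : lam 0 / lam2 < 1 := (div_lt_one hl2).mpr hlam0lt
    rw [hgdef]; linarith
  -- lower bound on ‖w‖ in terms of the error
  have hwlow : ∀ k, g * ‖e k‖ ≤ ‖w k‖ := by
    intro k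
    by_cases hek : e k = 0
    · simpa [hek] using norm_nonneg (w k)
    · have hen : 0 < ‖e k‖ := norm_pos_iff.mpr hek
      have hb2 : b (e k) (e k) ≤ ‖e k‖ ^ 2 / lam2 := by
        rw [le_div_iff₀ hl2]
        nlinarith [he2 k]
      have h4 : lam k * b (e k) (e k) ≤ lam 0 * (‖e k‖ ^ 2 / lam2) :=
        mul_le_mul (hlam_le k) hb2 (hb0 _) (hlam_pos 0).le
      have h5 : g * ‖e k‖ ^ 2 ≤ ⟪w k, e k⟫ := by
        rw [hwe k, hgdef]
        have h6 : lam 0 * (‖e k‖ ^ 2 / lam2) = lam 0 / lam2 * ‖e k‖ ^ 2 := by ring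
        nlinarith [h4]
      have h6 : ⟪w k, e k⟫ ≤ ‖w k‖ * ‖e k‖ := real_inner_le_norm _ _
      exact le_of_mul_le_mul_right (by nlinarith) hen
  -- error bounded by sqrt of eigenvalue error
  have hgap2 : ∀ k, ‖e k‖ ≤ Real.sqrt (lam2 / (lam2 - lam1)) * Real.sqrt (lam k - lam1) := by
    intro k
    have hpos : (0:ℝ) < lam2 - lam1 := by linarith
    have h1 : ‖e k‖ ^ 2 ≤ lam2 / (lam2 - lam1) * (lam k - lam1) := by
      rw [div_mul_eq_mul_div, le_div_iff₀ hpos]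
      nlinarith [hgap k]
    calc ‖e k‖ = Real.sqrt (‖e k‖ ^ 2) := (Real.sqrt_sq (norm_nonneg _)).symm
      _ ≤ Real.sqrt (lam2 / (lam2 - lam1) * (lam k - lam1)) := Real.sqrt_le_sqrt h1
      _ = Real.sqrt (lam2 / (lam2 - lam1)) * Real.sqrt (lam k - lam1) :=
          Real.sqrt_mul (by positivity) _
  have hdsq : ∀ k, lam k - lam1 ≤ Real.sqrt (lam 0) * Real.sqrt (lam k - lam1) := by
    intro k
    have h1 : lam k - lam1 ≤ lam 0 := by linarith [hlam_le k, hlam1]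
    have h2 : Real.sqrt (lam k - lam1) ≤ Real.sqrt (lam 0) := Real.sqrt_le_sqrt h1
    calc lam k - lam1 = Real.sqrt (lam k - lam1) * Real.sqrt (lam k - lam1) :=
          (Real.mul_self_sqrt (hdnn k)).symm
      _ ≤ Real.sqrt (lam 0) * Real.sqrt (lam k - lam1) :=
          mul_le_mul_of_nonneg_right h2 (Real.sqrt_nonneg _)
  have hlam0pos : 0 < lam 0 := hlam_pos 0
  set C4 : ℝ := Real.sqrt (lam 0) / Real.sqrt lam1
      + (1 + lam 0 / lam1) * Real.sqrt (lam2 / (lam2 - lam1)) with hC4def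
  have hC4nn : 0 ≤ C4 := by rw [hC4def]; positivity
  -- upper bound on ‖w‖ in terms of sqrt of eigenvalue error
  have hwup : ∀ k, ‖w k‖ ≤ C4 * Real.sqrt (lam k - lam1) := by
    intro k
    by_cases hwk : w k = 0
    · simp only [hwk, norm_zero]
      exact mul_nonneg hC4nn (Real.sqrt_nonneg _)
    · have hwn : 0 < ‖w k‖ := norm_pos_iff.mpr hwk
      have hid : ‖w k‖ ^ 2 = (lam1 - lam k) * b (s k) (w k)
          + (⟪e k, w k⟫ - lam k * b (e k) (w k)) := by
        have h1 : ⟪w k, w k⟫ = ⟪u k, w k⟫ - lam k * b (u k) (w k) := by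
          rw [hw k (w k), hlamk k]
        have h2 : ⟪u k, w k⟫ = ⟪s k, w k⟫ + ⟪e k, w k⟫ := by rw [hueq k, inner_add_left]
        have h3 : b (u k) (w k) = b (s k) (w k) + b (e k) (w k) := by
          conv_lhs => rw [hueq k]
          simp only [map_add, LinearMap.add_apply]
        have h4 : ⟪s k, w k⟫ = lam1 * b (s k) (w k) := (hsK k) (w k)
        rw [real_inner_self_eq_norm_sq] at h1
        rw [h2, h3, h4] at h1
        rw [h1]; ring
      have hbss : b (s k) (s k) ≤ 1 := by nlinarith [hbu k, hb0 (e k), hnorm k]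
      have hbsw : |b (s k) (w k)| ≤ ‖w k‖ / Real.sqrt lam1 := by
        calc |b (s k) (w k)| ≤ Real.sqrt (b (s k) (s k)) * Real.sqrt (b (w k) (w k)) :=
              bilin_abs_le b hb_symm hb0 _ _
          _ ≤ 1 * (‖w k‖ / Real.sqrt lam1) := by
              apply mul_le_mul _ (hbnorm _) (Real.sqrt_nonneg _) zero_le_one
              exact Real.sqrt_le_one.mpr hbss
          _ = ‖w k‖ / Real.sqrt lam1 := one_mul _
      have hew : |⟪e k, w k⟫| ≤ ‖e k‖ * ‖w k‖ := abs_real_inner_le_norm _ _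
      have hbew : |b (e k) (w k)| ≤ ‖e k‖ * ‖w k‖ / lam1 := hbabs _ _
      have d1 : (lam1 - lam k) * b (s k) (w k) ≤ (lam k - lam1) * (‖w k‖ / Real.sqrt lam1) := by
        calc (lam1 - lam k) * b (s k) (w k) ≤ |(lam1 - lam k) * b (s k) (w k)| := le_abs_self _
          _ = (lam k - lam1) * |b (s k) (w k)| := by
              rw [abs_mul, abs_of_nonpos (by linarith [hlam_ge k] : lam1 - lam k ≤ 0)]
              ring
          _ ≤ (lam k - lam1) * (‖w k‖ / Real.sqrt lam1) :=
              mul_le_mul_of_nonneg_left hbsw (hdnn k)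
      have d2 : ⟪e k, w k⟫ ≤ ‖e k‖ * ‖w k‖ := (le_abs_self _).trans hew
      have d3 : -(lam k * b (e k) (w k)) ≤ lam 0 * (‖e k‖ * ‖w k‖ / lam1) := by
        have h5 : -(b (e k) (w k)) ≤ |b (e k) (w k)| := by
          rcases abs_cases (b (e k) (w k)) with ⟨h, _⟩ | ⟨h, _⟩ <;> linarith [abs_nonneg (b (e k) (w k))]
        calc -(lam k * b (e k) (w k)) = lam k * (-(b (e k) (w k))) := by ring
          _ ≤ lam k * |b (e k) (w k)| := mul_le_mul_of_nonneg_left h5 (hlam_pos k).le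
          _ ≤ lam 0 * (‖e k‖ * ‖w k‖ / lam1) :=
              mul_le_mul (hlam_le k) hbew (abs_nonneg _) hlam0pos.le
      have hcomb : ‖w k‖ ^ 2 ≤ (lam k - lam1) * (‖w k‖ / Real.sqrt lam1)
          + ‖e k‖ * ‖w k‖ + lam 0 * (‖e k‖ * ‖w k‖ / lam1) := by
        rw [hid]; nlinarith [d1, d2, d3]
      have hdiv : ‖w k‖ ≤ (lam k - lam1) / Real.sqrt lam1 + (1 + lam 0 / lam1) * ‖e k‖ := by
        have h6 : ‖w k‖ * ‖w k‖ ≤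
            ((lam k - lam1) / Real.sqrt lam1 + (1 + lam 0 / lam1) * ‖e k‖) * ‖w k‖ := by
          calc ‖w k‖ * ‖w k‖ = ‖w k‖ ^ 2 := (sq (‖w k‖)).symm
            _ ≤ (lam k - lam1) * (‖w k‖ / Real.sqrt lam1)
                + ‖e k‖ * ‖w k‖ + lam 0 * (‖e k‖ * ‖w k‖ / lam1) := hcomb
            _ = ((lam k - lam1) / Real.sqrt lam1 + (1 + lam 0 / lam1) * ‖e k‖) * ‖w k‖ := by
                field_simp
                ring
        exact le_of_mul_le_mul_right h6 hwn
      calc ‖w k‖ ≤ (lam k - lam1) / Real.sqrt lam1 + (1 + lam 0 / lam1) * ‖e k‖ := hdiv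
        _ ≤ (Real.sqrt (lam 0) * Real.sqrt (lam k - lam1)) / Real.sqrt lam1
            + (1 + lam 0 / lam1) *
              (Real.sqrt (lam2 / (lam2 - lam1)) * Real.sqrt (lam k - lam1)) := by
            have t1 := hdsq k
            have t2 := hgap2 k
            have t3 : 0 ≤ 1 + lam 0 / lam1 := by positivity
            gcongr
        _ = C4 * Real.sqrt (lam k - lam1) := by rw [hC4def]; ring
  -- global bounds
  set Bw : ℝ := C4 * Real.sqrt (lam 0) with hBwdef
  have hBwnn : 0 ≤ Bw := mul_nonneg hC4nn (Real.sqrt_nonneg _)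
  have hwgl : ∀ k, ‖w k‖ ≤ Bw := by
    intro k
    calc ‖w k‖ ≤ C4 * Real.sqrt (lam k - lam1) := hwup k
      _ ≤ C4 * Real.sqrt (lam 0) := by
          apply mul_le_mul_of_nonneg_left _ hC4nn
          apply Real.sqrt_le_sqrt
          linarith [hlam_le k, hlam1]
  have hvb : ∀ k, ‖v k‖ ≤ 2 * ‖w k‖ := by
    intro k
    calc ‖v k‖ = ‖(v k - w k) + w k‖ := by rw [sub_add_cancel]
      _ ≤ ‖v k - w k‖ + ‖w k‖ := norm_add_le _ _
      _ ≤ eta * ‖w k‖ + ‖w k‖ := by linarith [hv k]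
      _ ≤ 2 * ‖w k‖ := by nlinarith [norm_nonneg (w k)]
  have hub : ∀ k, ‖u k‖ ≤ Real.sqrt (lam 0) := by
    intro k
    calc ‖u k‖ = Real.sqrt (‖u k‖ ^ 2) := (Real.sqrt_sq (norm_nonneg _)).symm
      _ ≤ Real.sqrt (lam 0) := Real.sqrt_le_sqrt (by rw [← hlameq k]; exact hlam_le k)
  set C2 : ℝ := (Real.sqrt (lam 0) + 2 * Bw) ^ 2 / lam1 with hC2def
  have hb'up : ∀ k, b (u k - v k) (u k - v k) ≤ C2 := by
    intro k
    have h1 : ‖u k - v k‖ ≤ Real.sqrt (lam 0) + 2 * Bw := by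
      calc ‖u k - v k‖ ≤ ‖u k‖ + ‖v k‖ := norm_sub_le _ _
        _ ≤ Real.sqrt (lam 0) + 2 * Bw := by
            have := hvb k
            have := hwgl k
            linarith [hub k]
    have h2 := hbound (u k - v k)
    rw [hC2def, le_div_iff₀ hlam1]
    nlinarith [norm_nonneg (u k - v k)]
  have hC2pos : 0 < C2 := lt_of_lt_of_le (hb'pos 0) (hb'up 0)
  -- the contraction factor
  set kap : ℝ := (1 - eta ^ 2) * g ^ 2 / C2 with hkapdef
  have heta2' : 0 < 1 - eta ^ 2 := by nlinarith
  have hkap : 0 < kap := by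
    rw [hkapdef]
    exact div_pos (mul_pos heta2' (pow_pos hg 2)) hC2pos
  set q : ℝ := max (1 - kap) 0 with hqdef
  have hq0 : 0 ≤ q := le_max_right _ _
  have hq1 : q < 1 := by
    rw [hqdef]
    exact max_lt (by linarith) one_pos
  have hcontr : ∀ k, lam (k + 1) - lam1 ≤ q * (lam k - lam1) := by
    intro k
    have h1 := hstep k
    have hwg : g ^ 2 * (lam k - lam1) ≤ ‖w k‖ ^ 2 := by
      have h2 := hwlow k
      have h3 := hdle k
      nlinarith [mul_self_le_mul_self (mul_nonneg hg.le (norm_nonneg (e k))) h2,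
        sq_nonneg g, hdnn k]
    have h4 : (1 - eta ^ 2) * (g ^ 2 * (lam k - lam1)) / C2 ≤
        (1 - eta ^ 2) * ‖w k‖ ^ 2 / b (u k - v k) (u k - v k) := by
      apply div_le_div₀ (by positivity) (mul_le_mul_of_nonneg_left hwg heta2'.le)
        (hb'pos k) (hb'up k)
    have h5 : (1 - eta ^ 2) * (g ^ 2 * (lam k - lam1)) / C2 = kap * (lam k - lam1) := by
      rw [hkapdef]; ring
    have h6 : lam (k + 1) - lam1 ≤ (1 - kap) * (lam k - lam1) := by
      rw [h5] at h4
      nlinarith [h1, h4]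
    calc lam (k + 1) - lam1 ≤ (1 - kap) * (lam k - lam1) := h6
      _ ≤ q * (lam k - lam1) := mul_le_mul_of_nonneg_right (le_max_left _ _) (hdnn k)
  have hgeo : ∀ k, lam k - lam1 ≤ q ^ k * (lam 0 - lam1) := by
    intro k
    induction k with
    | zero => simp
    | succ n ih =>
      calc lam (n + 1) - lam1 ≤ q * (lam n - lam1) := hcontr n
        _ ≤ q * (q ^ n * (lam 0 - lam1)) := mul_le_mul_of_nonneg_left ih hq0
        _ = q ^ (n + 1) * (lam 0 - lam1) := by ring
  -- geometric decay of the residuals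
  set r : ℝ := Real.sqrt q with hrdef
  have hr0 : 0 ≤ r := Real.sqrt_nonneg _
  have hr1 : r < 1 := by
    rw [hrdef]
    rw [show (1:ℝ) = Real.sqrt 1 from Real.sqrt_one.symm]
    exact Real.sqrt_lt_sqrt hq0 hq1
  have hsqpow : ∀ k : ℕ, Real.sqrt (q ^ k) = r ^ k := by
    intro k
    induction k with
    | zero => simp
    | succ n ih => rw [pow_succ, pow_succ, Real.sqrt_mul (pow_nonneg hq0 n), ih, hrdef]
  set R : ℝ := C4 * Real.sqrt (lam 0 - lam1) with hRdef
  have hRnn : 0 ≤ R := mul_nonneg hC4nn (Real.sqrt_nonneg _)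
  have hwgeo : ∀ k, ‖w k‖ ≤ R * r ^ k := by
    intro k
    calc ‖w k‖ ≤ C4 * Real.sqrt (lam k - lam1) := hwup k
      _ ≤ C4 * Real.sqrt (q ^ k * (lam 0 - lam1)) := by
          apply mul_le_mul_of_nonneg_left (Real.sqrt_le_sqrt (hgeo k)) hC4nn
      _ = C4 * (Real.sqrt (q ^ k) * Real.sqrt (lam 0 - lam1)) := by
          rw [Real.sqrt_mul (pow_nonneg hq0 k)]
      _ = R * r ^ k := by rw [hsqpow k, hRdef]; ring
  have hvgeo : ∀ k, ‖v k‖ ≤ 2 * R * r ^ k := by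
    intro k
    calc ‖v k‖ ≤ 2 * ‖w k‖ := hvb k
      _ ≤ 2 * (R * r ^ k) := by linarith [hwgeo k]
      _ = 2 * R * r ^ k := by ring
  -- the b-norm of the unnormalized iterate
  have hn_low : ∀ k, 1 - ‖v k‖ / Real.sqrt lam1 ≤ Real.sqrt (b (u k - v k) (u k - v k)) := by
    intro k
    have h1 : Real.sqrt (b (u k) (u k)) ≤ Real.sqrt (b (u k - v k) (u k - v k))
        + Real.sqrt (b (v k) (v k)) := by
      have h2 := bilin_sqrt_triangle b hb_symm hb0 (u k - v k) (v k)
      rw [sub_add_cancel] at h2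
      exact h2
    rw [hnorm k, Real.sqrt_one] at h1
    have h3 := hbnorm (v k)
    linarith
  -- distance between consecutive iterates
  have hdist : ∀ k, dist (u (k + 1)) (u k) ≤
      (1 + Real.sqrt (lam 0) / Real.sqrt lam1) * ‖v k‖
        / Real.sqrt (b (u k - v k) (u k - v k)) := by
    intro k
    set n : ℝ := Real.sqrt (b (u k - v k) (u k - v k)) with hndef
    have hn : 0 < n := Real.sqrt_pos.mpr (hb'pos k)
    have h1 : u (k + 1) - u k = n⁻¹ • ((u k - v k) - n • u k) := by
      conv_rhs => rw [smul_sub, smul_smul, inv_mul_cancel₀ hn.ne', one_smul]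
      rw [hiter k, ← hndef]
    have h2 : ‖(u k - v k) - n • u k‖ = ‖(1 - n) • u k - v k‖ := by
      congr 1
      rw [sub_smul, one_smul]
      abel
    have h3 : ‖(1 - n) • u k - v k‖ ≤ |1 - n| * ‖u k‖ + ‖v k‖ := by
      calc ‖(1 - n) • u k - v k‖ ≤ ‖(1 - n) • u k‖ + ‖v k‖ := norm_sub_le _ _
        _ = |1 - n| * ‖u k‖ + ‖v k‖ := by rw [norm_smul, Real.norm_eq_abs]
    have h4 : |1 - n| ≤ ‖v k‖ / Real.sqrt lam1 := by
      have hA : n ≤ 1 + Real.sqrt (b (v k) (v k)) := by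
        have h5 := bilin_sqrt_triangle b hb_symm hb0 (u k) (-(v k))
        have h6 : u k + -(v k) = u k - v k := by abel
        have h7 : b (-(v k)) (-(v k)) = b (v k) (v k) := by
          simp only [map_neg, LinearMap.neg_apply, neg_neg]
        rw [h6, h7, hnorm k, Real.sqrt_one] at h5
        rw [hndef]
        linarith
      have hB := hn_low k
      have h8 := hbnorm (v k)
      rw [abs_le]
      constructor <;> [linarith; linarith]
    have h9 : ‖u k‖ ≤ Real.sqrt (lam 0) := hub k
    have h10 : dist (u (k + 1)) (u k) = n⁻¹ * ‖(u k - v k) - n • u k‖ := by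
      rw [dist_eq_norm, h1, norm_smul, Real.norm_eq_abs, abs_of_pos (inv_pos.mpr hn)]
    have h11 : ‖(1 - n) • u k - v k‖ ≤ (1 + Real.sqrt (lam 0) / Real.sqrt lam1) * ‖v k‖ := by
      calc ‖(1 - n) • u k - v k‖ ≤ |1 - n| * ‖u k‖ + ‖v k‖ := h3
        _ ≤ (‖v k‖ / Real.sqrt lam1) * Real.sqrt (lam 0) + ‖v k‖ := by
            apply add_le_add_left
            exact mul_le_mul h4 h9 (norm_nonneg _) (by positivity)
        _ = (1 + Real.sqrt (lam 0) / Real.sqrt lam1) * ‖v k‖ := by ring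
    rw [h10, h2]
    calc n⁻¹ * ‖(1 - n) • u k - v k‖
        ≤ n⁻¹ * ((1 + Real.sqrt (lam 0) / Real.sqrt lam1) * ‖v k‖) :=
          mul_le_mul_of_nonneg_left h11 (inv_nonneg.mpr hn.le)
      _ = (1 + Real.sqrt (lam 0) / Real.sqrt lam1) * ‖v k‖ / n := by
          rw [div_eq_mul_inv]; ring
  -- eventually the b-norm is bounded below by 1/2
  have htend : Filter.Tendsto (fun k => 2 * R * r ^ k) Filter.atTop (nhds 0) := by
    have h1 := tendsto_pow_atTop_nhds_zero_of_lt_one hr0 hr1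
    have h2 := h1.const_mul (2 * R)
    simpa using h2
  have hev : ∀ᶠ k in Filter.atTop, 2 * R * r ^ k < Real.sqrt lam1 / 2 :=
    htend.eventually (gt_mem_nhds (by positivity))
  obtain ⟨K, hK⟩ := Filter.eventually_atTop.mp hev
  have hnK : ∀ k, K ≤ k → (1:ℝ) / 2 ≤ Real.sqrt (b (u k - v k) (u k - v k)) := by
    intro k hk
    have h1 := hn_low k
    have h2 : ‖v k‖ / Real.sqrt lam1 ≤ 1 / 2 := by
      rw [div_le_iff₀ hsl1]
      have h3 := (hvgeo k).trans (hK k hk).le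
      linarith
    linarith
  set C5 : ℝ := 1 + Real.sqrt (lam 0) / Real.sqrt lam1 with hC5def
  have hC5 : 0 < C5 := by rw [hC5def]; positivity
  have hdistK : ∀ k, K ≤ k → dist (u (k + 1)) (u k) ≤ 2 * C5 * (2 * R * r ^ k) := by
    intro k hk
    have h1 := hdist k
    have h2 := hnK k hk
    have h3 : C5 * ‖v k‖ / Real.sqrt (b (u k - v k) (u k - v k)) ≤ C5 * ‖v k‖ / (1 / 2) := by
      apply div_le_div_of_nonneg_left (by positivity) (by norm_num) h2
    have h4 : C5 * ‖v k‖ / (1 / 2) = 2 * (C5 * ‖v k‖) := by ring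
    have h5 : C5 * ‖v k‖ ≤ C5 * (2 * R * r ^ k) :=
      mul_le_mul_of_nonneg_left (hvgeo k) hC5.le
    calc dist (u (k + 1)) (u k)
        ≤ C5 * ‖v k‖ / Real.sqrt (b (u k - v k) (u k - v k)) := h1
      _ ≤ 2 * (C5 * ‖v k‖) := by rw [← h4]; exact h3
      _ ≤ 2 * (C5 * (2 * R * r ^ k)) := by linarith
      _ = 2 * C5 * (2 * R * r ^ k) := by ring
  -- summability of the distances, hence Cauchy
  have hsum : Summable fun k => dist (u k) (u (k + 1)) := by
    rw [← _root_.summable_nat_add_iff K]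
    have hgeo2 : Summable fun n : ℕ => (4 * C5 * R * r ^ K) * r ^ n :=
      (summable_geometric_of_lt_one hr0 hr1).mul_left _
    apply Summable.of_nonneg_of_le (fun n => dist_nonneg) _ hgeo2
    intro n
    rw [dist_comm]
    calc dist (u (n + K + 1)) (u (n + K)) ≤ 2 * C5 * (2 * R * r ^ (n + K)) :=
          hdistK (n + K) (Nat.le_add_left K n)
      _ = (4 * C5 * R * r ^ K) * r ^ n := by rw [pow_add]; ring
  have hcauchy : CauchySeq u := cauchySeq_of_summable_dist hsum
  obtain ⟨ustar, hus⟩ := cauchySeq_tendsto_of_complete hcauchy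
  -- properties of the limit
  -- continuity of b via a continuous bilinear map
  have hbb : ∀ x y : H, ‖b x y‖ ≤ (1 / lam1) * ‖x‖ * ‖y‖ := by
    intro x y
    have h1 := hbabs x y
    calc ‖b x y‖ = |b x y| := rfl
      _ ≤ ‖x‖ * ‖y‖ / lam1 := h1
      _ = (1 / lam1) * ‖x‖ * ‖y‖ := by ring
  set B : H →L[ℝ] H →L[ℝ] ℝ := LinearMap.mkContinuous₂ b (1 / lam1) hbb with hBdef
  have hBc : Continuous fun x : H => B x x :=
    B.continuous₂.comp (continuous_id.prodMk continuous_id)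
  have hBb : ∀ x : H, B x x = b x x := fun x => rfl
  have hblim : Filter.Tendsto (fun k => b (u k) (u k)) Filter.atTop (nhds (b ustar ustar)) := by
    have h1 := (hBc.tendsto ustar).comp hus
    simpa [hBb, Function.comp_def] using h1
  have hb1 : b ustar ustar = 1 := by
    have h2 : Filter.Tendsto (fun k => b (u k) (u k)) Filter.atTop (nhds 1) := by
      simp only [hnorm]
      exact tendsto_const_nhds
    exact tendsto_nhds_unique hblim h2
  -- the limit of the Rayleigh quotients is lam1
  have hlaml : Filter.Tendsto (fun k => lam k) Filter.atTop (nhds lam1) := by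
    have hup : Filter.Tendsto (fun k => lam1 + q ^ k * (lam 0 - lam1)) Filter.atTop
        (nhds (lam1 + 0 * (lam 0 - lam1))) := by
      exact tendsto_const_nhds.add
        ((tendsto_pow_atTop_nhds_zero_of_lt_one hq0 hq1).mul_const _)
    rw [zero_mul, add_zero] at hup
    apply tendsto_of_tendsto_of_tendsto_of_le_of_le tendsto_const_nhds hup
    · exact fun k => hlam_ge k
    · intro k
      have h := hgeo k
      show lam k ≤ lam1 + q ^ k * (lam 0 - lam1)
      linarith
  have hnsl : Filter.Tendsto (fun k => ‖u k‖ ^ 2) Filter.atTop (nhds (‖ustar‖ ^ 2)) := by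
    have hcont : Continuous fun x : H => ‖x‖ ^ 2 := continuous_norm.pow 2
    exact (hcont.tendsto ustar).comp hus
  have hsn : ‖ustar‖ ^ 2 = lam1 := by
    have h1 : Filter.Tendsto (fun k => ‖u k‖ ^ 2) Filter.atTop (nhds lam1) := by
      have h2 : (fun k => ‖u k‖ ^ 2) = fun k => lam k := by
        funext k
        rw [hlameq k]
      rw [h2]
      exact hlaml
    exact tendsto_nhds_unique hnsl h1
  -- the limit is an eigenvector
  refine ⟨hcauchy, ustar, hus, hb1, ?_⟩
  intro χ
  have hquad : ∀ t : ℝ, 0 ≤ t ^ 2 * (‖χ‖ ^ 2 - lam1 * b χ χ)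
      + 2 * t * (⟪ustar, χ⟫ - lam1 * b ustar χ) := by
    intro t
    have h1 := hbound (ustar + t • χ)
    have h2 : ‖ustar + t • χ‖ ^ 2 = ‖ustar‖ ^ 2 + 2 * t * ⟪ustar, χ⟫ + t ^ 2 * ‖χ‖ ^ 2 := by
      rw [@norm_add_sq_real, real_inner_smul_right, norm_smul]
      simp only [Real.norm_eq_abs, mul_pow, sq_abs]
      ring
    have h3 : b (ustar + t • χ) (ustar + t • χ)
        = b ustar ustar + 2 * t * b ustar χ + t ^ 2 * b χ χ := by
      rw [bilin_expand b hb_symm]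
      ring
    rw [h2, h3, hsn, hb1] at h1
    nlinarith [h1]
  have hBc0 : ⟪ustar, χ⟫ - lam1 * b ustar χ = 0 :=
    quad_nonneg_zero _ _ (by linarith [hbound χ]) hquad
  linarith [hBc0]
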